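/- arXiv:2603.07149 — 2 statements merged into one kernel-verified Lean document; each statement's English description precedes it below -/
import Mathlib

section
/- Let C* > 0 and D ∈ ℝ. There exists a constant K > 0, depending only on C* and D and independent of time, such that for all real numbers r₁, r₂, t with t ≥ max(r₁, r₂) ≥ 1, one has ∫_{max(r₁,r₂)}^{t} u^D · e^{−C*(u−r₁)} · e^{−C*(u−r₂)} du ≤ K · (max(r₁,r₂))^D · e^{−C*(max(r₁,r₂) − min(r₁,r₂))}. -/
/-!
With `M = max r₁ r₂` and `m = min r₁ r₂`, the two exponentials combine to
`e^{-C(M-m)} e^{-2C(u-M)}`. For `u ≥ M ≥ 1` we have `u / M ≤ 1 + (u - M) ≤ e^{ε(u-M)} / ε`,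
so the polynomial factor costs at most `ε^{-p} M^D e^{pε(u-M)}` with `p = max D 0`; choosing
`ε = C / (C + p)` makes `pε ≤ C`, which leaves the integrable majorant `e^{-C(u-M)}`,
whose integral over `[M, t]` is at most `1 / C` whatever `t` is.
-/

open Real

lemma integral_exp_neg_mul_sub_le {c : ℝ} (hc : 0 < c) (a b : ℝ) :
    ∫ u in a..b, exp (-c * (u - a)) ≤ 1 / c := by
  have hderiv : ∀ u ∈ Set.uIcc a b,
      HasDerivAt (fun u => -exp (-c * (u - a)) / c) (exp (-c * (u - a))) u := by
    intro u _
    have h := ((((hasDerivAt_id' u).sub_const a).const_mul (-c)).exp.neg.div_const c)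
    refine h.congr_deriv ?_
    field_simp
  rw [intervalIntegral.integral_eq_sub_of_hasDerivAt hderiv
    (Continuous.intervalIntegrable (by fun_prop) a b)]
  have := exp_pos (-c * (b - a))
  simp only [sub_self, mul_zero, exp_zero]
  rw [div_sub_div_same, div_le_div_iff_of_pos_right hc]
  linarith

lemma one_add_le_exp_mul_div {ε : ℝ} (x : ℝ) (hε₀ : 0 < ε) (hε₁ : ε ≤ 1) :
    1 + x ≤ exp (ε * x) / ε := by
  rw [le_div_iff₀ hε₀]
  nlinarith [add_one_le_exp (ε * x)]

lemma rpow_le_mul_rpow_mul_exp {m u D p ε : ℝ} (hm : 1 ≤ m) (hmu : m ≤ u) (hDp : D ≤ p)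
    (hp : 0 ≤ p) (hε₀ : 0 < ε) (hε₁ : ε ≤ 1) :
    u ^ D ≤ ε ^ (-p) * m ^ D * exp (p * ε * (u - m)) := by
  have hm₀ : 0 < m := by linarith
  have hratio : 1 ≤ u / m := by rwa [one_le_div hm₀]
  have hratio_le : u / m ≤ exp (ε * (u - m)) / ε := by
    calc u / m ≤ 1 + (u - m) := by
          rw [div_le_iff₀ hm₀]; nlinarith
      _ ≤ exp (ε * (u - m)) / ε := one_add_le_exp_mul_div _ hε₀ hε₁
  calc u ^ D = m ^ D * (u / m) ^ D := by
        rw [div_rpow (by linarith) hm₀.le, mul_div_cancel₀ _ (rpow_pos_of_pos hm₀ D).ne']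
    _ ≤ m ^ D * (u / m) ^ p := by
        gcongr
    _ ≤ m ^ D * (exp (ε * (u - m)) / ε) ^ p := by
        gcongr
    _ = ε ^ (-p) * m ^ D * exp (p * ε * (u - m)) := by
        rw [div_rpow (exp_pos _).le hε₀.le, ← exp_mul, rpow_neg hε₀.le]
        ring_nf

lemma exp_mul_exp_eq_max_min (c r₁ r₂ u : ℝ) :
    exp (-c * (u - r₁)) * exp (-c * (u - r₂)) =
      exp (-c * (max r₁ r₂ - min r₁ r₂)) * exp (-(2 * c) * (u - max r₁ r₂)) := by
  rw [← exp_add, ← exp_add]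
  congr 1
  linear_combination (-c) * max_add_min r₁ r₂

lemma rpow_mul_exp_mul_exp_le {c D p ε r₁ r₂ u : ℝ} (hM : 1 ≤ max r₁ r₂) (hMu : max r₁ r₂ ≤ u)
    (hDp : D ≤ p) (hp : 0 ≤ p) (hε₀ : 0 < ε) (hε₁ : ε ≤ 1) (hpε : p * ε ≤ c) :
    u ^ D * exp (-c * (u - r₁)) * exp (-c * (u - r₂)) ≤
      ε ^ (-p) * max r₁ r₂ ^ D * exp (-c * (max r₁ r₂ - min r₁ r₂)) *
        exp (-c * (u - max r₁ r₂)) := by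
  set M := max r₁ r₂
  have hdecay : exp (p * ε * (u - M)) * exp (-(2 * c) * (u - M)) ≤ exp (-c * (u - M)) := by
    rw [← exp_add, exp_le_exp]
    nlinarith
  calc u ^ D * exp (-c * (u - r₁)) * exp (-c * (u - r₂))
      = u ^ D * exp (-c * (M - min r₁ r₂)) * exp (-(2 * c) * (u - M)) := by
        rw [mul_assoc, exp_mul_exp_eq_max_min, mul_assoc]
    _ ≤ ε ^ (-p) * M ^ D * exp (p * ε * (u - M)) * exp (-c * (M - min r₁ r₂)) *
          exp (-(2 * c) * (u - M)) := by
        gcongr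
        exact rpow_le_mul_rpow_mul_exp hM hMu hDp hp hε₀ hε₁
    _ = ε ^ (-p) * M ^ D * exp (-c * (M - min r₁ r₂)) *
          (exp (p * ε * (u - M)) * exp (-(2 * c) * (u - M))) := by ring
    _ ≤ ε ^ (-p) * M ^ D * exp (-c * (M - min r₁ r₂)) * exp (-c * (u - M)) := by
        gcongr

/-- Lemma 5.8: integral estimate with exponential decay.
For `C* > 0` and `D ∈ ℝ` there is a time-independent constant `K > 0` such that
for all `r₁ r₂ t` with `t ≥ max r₁ r₂ ≥ 1`,
`∫_{max(r₁,r₂)}^t u^D e^{-C*(u-r₁)} e^{-C*(u-r₂)} du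
  ≤ K (max r₁ r₂)^D e^{-C*(max r₁ r₂ - min r₁ r₂)}`. -/
theorem stmt_0 (Cstar D : ℝ) (hC : 0 < Cstar) :
    ∃ K : ℝ, 0 < K ∧ ∀ r₁ r₂ t : ℝ, 1 ≤ max r₁ r₂ → max r₁ r₂ ≤ t →
      (∫ u in (max r₁ r₂)..t,
          u ^ D * Real.exp (-Cstar * (u - r₁)) * Real.exp (-Cstar * (u - r₂)))
        ≤ K * (max r₁ r₂) ^ D * Real.exp (-Cstar * (max r₁ r₂ - min r₁ r₂)) := by
  set p := max D 0
  have hp : 0 ≤ p := le_max_right D 0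
  set ε := Cstar / (Cstar + p)
  have hε₀ : 0 < ε := by positivity
  have hε₁ : ε ≤ 1 := (div_le_one (by positivity)).2 (by linarith)
  have hpε : p * ε ≤ Cstar := by
    rw [mul_div_assoc', div_le_iff₀ (by positivity)]
    nlinarith
  refine ⟨ε ^ (-p) / Cstar, by positivity, fun r₁ r₂ t hM hMt => ?_⟩
  set M := max r₁ r₂
  set A := ε ^ (-p) * M ^ D * exp (-Cstar * (M - min r₁ r₂))
  have hintegrable : IntervalIntegrable
      (fun u => u ^ D * exp (-Cstar * (u - r₁)) * exp (-Cstar * (u - r₂)))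
      MeasureTheory.volume M t := by
    refine ContinuousOn.intervalIntegrable (ContinuousOn.mul (ContinuousOn.mul ?_ (by fun_prop))
      (by fun_prop))
    refine continuousOn_id.rpow_const fun u hu => Or.inl ?_
    rw [Set.uIcc_of_le hMt] at hu
    exact (zero_lt_one.trans_le (hM.trans hu.1)).ne'
  calc ∫ u in M..t, u ^ D * exp (-Cstar * (u - r₁)) * exp (-Cstar * (u - r₂))
      ≤ ∫ u in M..t, A * exp (-Cstar * (u - M)) :=
        intervalIntegral.integral_mono_on hMt hintegrable
          (by apply Continuous.intervalIntegrable; fun_prop)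
          fun u hu => rpow_mul_exp_mul_exp_le hM hu.1 (le_max_left D 0) hp hε₀ hε₁ hpε
    _ = A * ∫ u in M..t, exp (-Cstar * (u - M)) := intervalIntegral.integral_const_mul _ _
    _ ≤ A * (1 / Cstar) := by gcongr; exact integral_exp_neg_mul_sub_le hC M t
    _ = ε ^ (-p) / Cstar * M ^ D * exp (-Cstar * (M - min r₁ r₂)) := by ring
end

section
/- Let c > 1/2, C* > 0, and t* ≥ 1. There exists a time-independent constant K > 0 such that for all t ≥ t*, the quantity I₁(t) := t^{−4c} · ∫_{u=t*}^{t} ∫_{s=u}^{t} ∫_{w=s}^{t} ∫_{r=w}^{t} r^{2c−2} · s^{c−1} · w^{c−1} · e^{−2C* r + 2C* u} dr dw ds du satisfies: I₁(t) ≤ K/t³ if c > 3/4; I₁(t) ≤ K(1 + log t)/t³ if c = 3/4; and I₁(t) ≤ K/t^{4c} if 1/2 < c < 3/4. -/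
/-- The quantity `I₁(t)` from Lemma 5.3: a fourfold iterated integral over the
ordered region `t* ≤ u ≤ s ≤ w ≤ r ≤ t`, scaled by `t^{-4c}`. -/
noncomputable def I1 (c Cstar tstar t : ℝ) : ℝ :=
  t ^ (-(4 * c)) *
    ∫ u in tstar..t, ∫ s in u..t, ∫ w in s..t, ∫ r in w..t,
      r ^ (2 * c - 2) * s ^ (c - 1) * w ^ (c - 1) *
        Real.exp (-2 * Cstar * r + 2 * Cstar * u)

/-! For `w ≥ 1` the factor `(r / w) ^ a` grows more slowly than `exp (δ (r - w) / 2)`, so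
`∫_w^t r^a e^{-δr} dr` is at most a constant times `w^a e^{-δw}`, uniformly in `t`. Applied three
times (the weights `s^{c-1}`, `w^{c-1}` only shift the exponent), this collapses the fourfold
integral to `B ∫_{t*}^t u^{4c-4} du`, the factors `e^{±2C* u}` cancelling. The three regimes are
those of `∫ u^{4c-4}`: the exponent `4c - 4` is above, equal to, or below `-1`. -/

open Real Set MeasureTheory intervalIntegral

theorem exists_rpow_le_mul_rpow_mul_exp (a : ℝ) {η : ℝ} (hη : 0 < η) :
    ∃ A > 0, ∀ x y : ℝ, 1 ≤ x → x ≤ y → y ^ a ≤ A * x ^ a * exp (η * (y - x)) := by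
  rcases le_or_gt a 0 with ha | ha
  · refine ⟨1, one_pos, fun x y hx hxy => ?_⟩
    have hexp : 1 ≤ exp (η * (y - x)) := one_le_exp (by nlinarith)
    calc y ^ a ≤ x ^ a := rpow_le_rpow_of_nonpos (by linarith) hxy ha
      _ ≤ 1 * x ^ a * exp (η * (y - x)) := by
        rw [one_mul]; exact le_mul_of_one_le_right (by positivity) hexp
  · set k := max 1 (a / η)
    have hk1 : 1 ≤ k := le_max_left _ _
    have hk0 : 0 < k := by linarith
    have hak : a / k ≤ η := by
      rw [div_le_iff₀ hk0, mul_comm, ← div_le_iff₀ hη]; exact le_max_right _ _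
    refine ⟨k ^ a, by positivity, fun x y hx hxy => ?_⟩
    -- With `z = y - x`: `y ≤ x (1 + z) ≤ x (k + z) = x k (1 + z / k) ≤ x k exp (z / k)`.
    have hy : y ≤ x * k * exp ((y - x) / k) := by
      have := add_one_le_exp ((y - x) / k)
      have h : k * ((y - x) / k + 1) = k + (y - x) := by field_simp; ring
      nlinarith [mul_le_mul_of_nonneg_left this hk0.le]
    calc y ^ a ≤ (x * k * exp ((y - x) / k)) ^ a := rpow_le_rpow (by linarith) hy ha.le
      _ = k ^ a * x ^ a * exp (a / k * (y - x)) := by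
        rw [mul_rpow (by positivity) (exp_pos _).le, mul_rpow (by linarith) hk0.le,
          ← exp_mul]
        ring_nf
      _ ≤ k ^ a * x ^ a * exp (η * (y - x)) := by gcongr

theorem integral_exp_neg_mul_sub_le_s1 {η : ℝ} (hη : 0 < η) (w t : ℝ) :
    ∫ r in w..t, exp (-(η * (r - w))) ≤ 1 / η := by
  have h := integral_comp_mul_add (f := exp) (a := w) (b := t) (neg_ne_zero.mpr hη.ne') (η * w)
  simp only [integral_exp, smul_eq_mul] at h
  have : ∀ r, -(η * (r - w)) = -η * r + η * w := fun r => by ring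
  simp_rw [this, h]
  rw [show -η * w + η * w = 0 by ring, exp_zero, inv_neg, one_div]
  nlinarith [exp_pos (-η * t + η * w), inv_pos.mpr hη]

theorem integral_le_integral_of_le_of_nonneg {f g : ℝ → ℝ} {a b : ℝ} (hab : a ≤ b)
    (hg : IntervalIntegrable g volume a b) (hg0 : ∀ x ∈ Icc a b, 0 ≤ g x)
    (hfg : ∀ x ∈ Icc a b, f x ≤ g x) :
    ∫ x in a..b, f x ≤ ∫ x in a..b, g x := by
  by_cases hf : IntervalIntegrable f volume a b
  · exact integral_mono_on hab hf hg hfg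
  · -- the integral of a non-integrable function is the junk value `0`
    rw [integral_undef hf]
    exact integral_nonneg hab hg0

theorem exists_integral_le_rpow_mul_exp_neg (a : ℝ) {δ : ℝ} (hδ : 0 < δ) :
    ∃ B > 0, ∀ (g : ℝ → ℝ) (C w t : ℝ), 0 ≤ C → 1 ≤ w → w ≤ t →
      (∀ r ∈ Icc w t, g r ≤ C * (r ^ a * exp (-(δ * r)))) →
      ∫ r in w..t, g r ≤ B * C * (w ^ a * exp (-(δ * w))) := by
  obtain ⟨A, hA, hgrowth⟩ := exists_rpow_le_mul_rpow_mul_exp a (half_pos hδ)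
  refine ⟨A * (1 / (δ / 2)), by positivity, fun g C w t hC hw hwt hg => ?_⟩
  set M := C * A * (w ^ a * exp (-(δ * w)))
  have hM : 0 ≤ M := by have := rpow_nonneg (zero_le_one.trans hw) a; positivity
  -- Half of the exponential decay absorbs the polynomial growth of `r ^ a` over `[w, t]`.
  have hpointwise : ∀ r ∈ Icc w t, g r ≤ M * exp (-(δ / 2 * (r - w))) := fun r hr =>
    calc g r ≤ C * (r ^ a * exp (-(δ * r))) := hg r hr
      _ ≤ C * (A * w ^ a * exp (δ / 2 * (r - w)) * exp (-(δ * r))) := by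
        gcongr; exact hgrowth w r hw hr.1
      _ = M * exp (-(δ / 2 * (r - w))) := by
        simp only [M, mul_assoc, ← exp_add]; ring_nf
  calc ∫ r in w..t, g r ≤ ∫ r in w..t, M * exp (-(δ / 2 * (r - w))) :=
        integral_le_integral_of_le_of_nonneg hwt
          ((by fun_prop : Continuous _).intervalIntegrable _ _) (fun r _ => by positivity)
          hpointwise
    _ = M * ∫ r in w..t, exp (-(δ / 2 * (r - w))) := integral_const_mul _ _
    _ ≤ M * (1 / (δ / 2)) := by gcongr; exact integral_exp_neg_mul_sub_le_s1 (half_pos hδ) w t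
    _ = A * (1 / (δ / 2)) * C * (w ^ a * exp (-(δ * w))) := by ring

theorem exists_rpow_mul_integral_le (a b : ℝ) {δ : ℝ} (hδ : 0 < δ) :
    ∃ B > 0, ∀ (g : ℝ → ℝ) (C w t : ℝ), 0 ≤ C → 1 ≤ w → w ≤ t →
      (∀ r ∈ Icc w t, g r ≤ C * (r ^ a * exp (-(δ * r)))) →
      w ^ b * ∫ r in w..t, g r ≤ B * C * (w ^ (a + b) * exp (-(δ * w))) := by
  obtain ⟨B, hB, htail⟩ := exists_integral_le_rpow_mul_exp_neg a hδ
  refine ⟨B, hB, fun g C w t hC hw hwt hg => ?_⟩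
  have hw0 : 0 < w := zero_lt_one.trans_le hw
  calc w ^ b * ∫ r in w..t, g r ≤ w ^ b * (B * C * (w ^ a * exp (-(δ * w)))) := by
        gcongr; exact htail g C w t hC hw hwt hg
    _ = B * C * (w ^ (a + b) * exp (-(δ * w))) := by rw [rpow_add hw0]; ring

theorem exists_nested_integral_le (a b₁ b₂ : ℝ) {δ : ℝ} (hδ : 0 < δ) :
    ∃ B > 0, ∀ l t : ℝ, 1 ≤ l → l ≤ t →
      ∫ u in l..t, exp (δ * u) * ∫ s in u..t, s ^ b₁ * ∫ w in s..t, w ^ b₂ *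
        ∫ r in w..t, r ^ a * exp (-(δ * r)) ≤ B * ∫ u in l..t, u ^ (a + b₂ + b₁) := by
  obtain ⟨B₁, hB₁, h₁⟩ := exists_rpow_mul_integral_le a b₂ hδ
  obtain ⟨B₂, hB₂, h₂⟩ := exists_rpow_mul_integral_le (a + b₂) b₁ hδ
  obtain ⟨B₃, hB₃, h₃⟩ := exists_integral_le_rpow_mul_exp_neg (a + b₂ + b₁) hδ
  refine ⟨B₃ * (B₂ * B₁), by positivity, fun l t hl hlt => ?_⟩
  have hw : ∀ w ∈ Icc l t, w ^ b₂ * ∫ r in w..t, r ^ a * exp (-(δ * r)) ≤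
      B₁ * (w ^ (a + b₂) * exp (-(δ * w))) := fun w hw =>
    mul_one B₁ ▸ h₁ _ 1 w t zero_le_one (hl.trans hw.1) hw.2 fun r _ => (one_mul _).ge
  have hs : ∀ s ∈ Icc l t, s ^ b₁ * ∫ w in s..t, w ^ b₂ * ∫ r in w..t, r ^ a * exp (-(δ * r)) ≤
      B₂ * B₁ * (s ^ (a + b₂ + b₁) * exp (-(δ * s))) := fun s hs =>
    h₂ _ _ s t (by positivity) (hl.trans hs.1) hs.2 fun w hw' => hw w ⟨hs.1.trans hw'.1, hw'.2⟩
  have hu : ∀ u ∈ Icc l t, ∫ s in u..t, s ^ b₁ * ∫ w in s..t, w ^ b₂ *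
      ∫ r in w..t, r ^ a * exp (-(δ * r)) ≤
      B₃ * (B₂ * B₁) * (u ^ (a + b₂ + b₁) * exp (-(δ * u))) := fun u hu =>
    h₃ _ _ u t (by positivity) (hl.trans hu.1) hu.2 fun s hs' => hs s ⟨hu.1.trans hs'.1, hs'.2⟩
  have hl0 : 0 < l := zero_lt_one.trans_le hl
  have hpow : IntervalIntegrable (fun u => u ^ (a + b₂ + b₁)) volume l t :=
    intervalIntegrable_rpow (Or.inr (by rw [uIcc_of_le hlt]; exact fun h => hl0.not_ge h.1))
  rw [← intervalIntegral.integral_const_mul]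
  refine integral_le_integral_of_le_of_nonneg hlt (hpow.const_mul _)
    (fun u hu => by have := rpow_nonneg (hl0.le.trans hu.1) (a + b₂ + b₁); positivity)
    fun u hu' => ?_
  have hexp : exp (δ * u) * exp (-(δ * u)) = 1 := by rw [← exp_add]; simp
  calc exp (δ * u) * _ ≤ exp (δ * u) * (B₃ * (B₂ * B₁) *
        (u ^ (a + b₂ + b₁) * exp (-(δ * u)))) := by gcongr; exact hu u hu'
    _ = B₃ * (B₂ * B₁) * u ^ (a + b₂ + b₁) := by
      linear_combination B₃ * (B₂ * B₁) * u ^ (a + b₂ + b₁) * hexp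

theorem integral_rpow_le_of_neg_one_lt {p : ℝ} (hp : -1 < p) {l : ℝ} (hl : 0 ≤ l) (t : ℝ) :
    ∫ u in l..t, u ^ p ≤ t ^ (p + 1) / (p + 1) := by
  rw [integral_rpow (Or.inl hp)]
  exact div_le_div_of_nonneg_right (sub_le_self _ (rpow_nonneg hl _)) (by linarith)

theorem integral_rpow_neg_one_le {l t : ℝ} (hl : 1 ≤ l) (ht : 0 < t) :
    ∫ u in l..t, u ^ (-1 : ℝ) ≤ log t := by
  have hl0 : 0 < l := zero_lt_one.trans_le hl
  simp_rw [rpow_neg_one]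
  rw [integral_inv (notMem_uIcc_of_lt hl0 ht), log_div ht.ne' hl0.ne']
  linarith [log_nonneg hl]

theorem integral_rpow_le_of_lt_neg_one {p : ℝ} (hp : p < -1) {l t : ℝ} (hl : 1 ≤ l)
    (ht : 0 < t) : ∫ u in l..t, u ^ p ≤ (-(p + 1))⁻¹ := by
  have hl0 : 0 < l := zero_lt_one.trans_le hl
  rw [integral_rpow (Or.inr ⟨hp.ne, notMem_uIcc_of_lt hl0 ht⟩), ← neg_div_neg_eq, neg_sub,
    inv_eq_one_div]
  have := rpow_nonneg ht.le (p + 1)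
  have := rpow_le_one_of_one_le_of_nonpos hl (by linarith : p + 1 ≤ 0)
  exact div_le_div_of_nonneg_right (by linarith) (by linarith)

theorem I1_eq (c Cstar tstar t : ℝ) :
    I1 c Cstar tstar t = t ^ (-(4 * c)) * ∫ u in tstar..t, exp (2 * Cstar * u) *
      ∫ s in u..t, s ^ (c - 1) * ∫ w in s..t, w ^ (c - 1) *
        ∫ r in w..t, r ^ (2 * c - 2) * exp (-(2 * Cstar * r)) := by
  simp only [I1, ← intervalIntegral.integral_const_mul]
  congr! 8 with u s w r
  rw [show -2 * Cstar * r + 2 * Cstar * u = 2 * Cstar * u + -(2 * Cstar * r) by ring, exp_add]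
  ring

theorem stmt_1_general (c Cstar tstar : ℝ) (hC : 0 < Cstar)
    (htstar : 1 ≤ tstar) :
    ∃ K : ℝ, 0 < K ∧ ∀ t : ℝ, tstar ≤ t →
      (3 / 4 < c → I1 c Cstar tstar t ≤ K / t ^ 3) ∧
      (c = 3 / 4 → I1 c Cstar tstar t ≤ K * (1 + Real.log t) / t ^ 3) ∧
      (c < 3 / 4 → I1 c Cstar tstar t ≤ K / t ^ (4 * c)) := by
  obtain ⟨B, hB, hnested⟩ :=
    exists_nested_integral_le (2 * c - 2) (c - 1) (c - 1) (by positivity : 0 < 2 * Cstar)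
  refine ⟨B * (1 + |4 * c - 3|⁻¹), by positivity, fun t ht => ?_⟩
  have ht0 : 0 < t := by linarith
  have hI : I1 c Cstar tstar t ≤ B * (∫ u in tstar..t, u ^ (4 * c - 4)) / t ^ (4 * c) := by
    rw [I1_eq, rpow_neg ht0.le, inv_mul_eq_div,
      show 4 * c - 4 = 2 * c - 2 + (c - 1) + (c - 1) by ring]
    gcongr
    exact hnested tstar t htstar ht
  have hB₁ : B ≤ B * (1 + |4 * c - 3|⁻¹) := by
    have := inv_nonneg.mpr (abs_nonneg (4 * c - 3)); nlinarith
  have hB₂ : B * |4 * c - 3|⁻¹ ≤ B * (1 + |4 * c - 3|⁻¹) := by gcongr; linarith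
  refine ⟨fun hc => ?_, fun hc => ?_, fun hc => ?_⟩
  · have hint := integral_rpow_le_of_neg_one_lt (p := 4 * c - 4) (by linarith)
      (zero_le_one.trans htstar) t
    rw [show 4 * c - 4 + 1 = 4 * c - 3 by ring] at hint
    calc I1 c Cstar tstar t ≤ B * (t ^ (4 * c - 3) / (4 * c - 3)) / t ^ (4 * c) := by
          refine hI.trans ?_; gcongr
      _ = B * |4 * c - 3|⁻¹ / t ^ 3 := by
        rw [abs_of_pos (by linarith), rpow_sub ht0, rpow_ofNat]
        field_simp
      _ ≤ _ := by gcongr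
  · have hint := integral_rpow_neg_one_le htstar ht0
    rw [show 4 * c - 4 = -1 by rw [hc]; norm_num, show 4 * c = 3 by rw [hc]; norm_num,
      rpow_ofNat] at hI
    calc I1 c Cstar tstar t ≤ B * (1 + log t) / t ^ 3 := by
          refine hI.trans ?_; gcongr; linarith
      _ ≤ _ := by gcongr; linarith [log_nonneg (htstar.trans ht)]
  · have hint := integral_rpow_le_of_lt_neg_one (p := 4 * c - 4) (by linarith) htstar ht0
    rw [show -(4 * c - 4 + 1) = |4 * c - 3| by rw [abs_of_neg (by linarith)]; ring] at hint
    calc I1 c Cstar tstar t ≤ B * |4 * c - 3|⁻¹ / t ^ (4 * c) := by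
          refine hI.trans ?_; gcongr
      _ ≤ _ := by gcongr

/-- Lemma 5.3 of the paper. -/
theorem stmt_1 (c Cstar tstar : ℝ) (hc : 1 / 2 < c) (hC : 0 < Cstar)
    (htstar : 1 ≤ tstar) :
    ∃ K : ℝ, 0 < K ∧ ∀ t : ℝ, tstar ≤ t →
      (3 / 4 < c → I1 c Cstar tstar t ≤ K / t ^ 3) ∧
      (c = 3 / 4 → I1 c Cstar tstar t ≤ K * (1 + Real.log t) / t ^ 3) ∧
      (c < 3 / 4 → I1 c Cstar tstar t ≤ K / t ^ (4 * c)) :=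
  stmt_1_general c Cstar tstar hC htstar
end
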